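/- Let τ = (1+√5)/2 and let ℤ[τ] = {p + qτ : p, q ∈ ℤ} ⊆ ℝ. If a, b, c ∈ ℤ[τ] satisfy a ≤ 0, b ≤ 0, c ≤ 0 and the symmetric real matrix [[2, a, b, c], [a, 2, -1, 0], [b, -1, 2, -τ], [c, 0, -τ, 2]] has determinant 0, then a = 0, b = 1 - τ, and c = 0. In other words, this bordered matrix with (a, b, c) = (0, τ', 0), τ' = 1 - τ, is the unique affine extension of the Cartan matrix of H₃ satisfying the conditions: diagonal entries 2, symmetry, off-diagonal entries nonpositive elements of ℤ[τ], and determinant 0. -/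

import Mathlib

noncomputable def tau : ℝ := (1 + Real.sqrt 5) / 2

/-- The ring of integers ℤ[τ] of ℚ(√5), as a subset of ℝ. -/
def Ztau : Set ℝ := {x : ℝ | ∃ p q : ℤ, x = (p : ℝ) + (q : ℝ) * tau}

/-!
Bordering the Cartan matrix `C` of H₃ by `v = (a, b, c)` gives determinant
`2 det C - vᵀ adj(C) v`, so the condition is the quadratic equation `vᵀ adj(C) v = 2 det C`
with coefficients in ℤ[τ]. Since `τ` is irrational, this equation already holds in the abstract
ring ℤ[ω], `ω² = ω + 1`, hence also under the Galois conjugate embedding `ω ↦ τ'`. For both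
roots `t ∈ {τ, τ'}` of `X² = X + 1` the matrix `adj(C_t)` is positive definite, which bounds `a`,
`b`, `c` and their conjugates by `2` in absolute value. This leaves five candidates in ℤ[ω] for
each of `a`, `b`, `c`, and a finite check finds `(0, 1 - ω, 0)` as the only solution.
-/

open QuadraticAlgebra Real
open scoped goldenRatio

section H3Cartan

variable {R : Type*} [CommRing R]

/-- `vᵀ adj(C) v` for `v = (a, b, c)` and the H₃ Cartan matrix `C` with `τ` replaced by `t`. -/
def h3AdjForm (t a b c : R) : R :=
  (4 - t ^ 2) * a ^ 2 + 4 * b ^ 2 + 3 * c ^ 2 + 4 * a * b + 2 * t * a * c + 4 * t * b * c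

theorem map_h3AdjForm {S F : Type*} [CommRing S] [FunLike F R S] [RingHomClass F R S] (f : F)
    (t a b c : R) : f (h3AdjForm t a b c) = h3AdjForm (f t) (f a) (f b) (f c) := by
  simp only [h3AdjForm, map_add, map_mul, map_sub, map_pow, map_ofNat]

theorem det_bordered_h3Cartan (t a b c : R) :
    Matrix.det !![2, a, b, c; a, 2, -1, 0; b, -1, 2, -t; c, 0, -t, 2] =
      2 * (6 - 2 * t ^ 2) - h3AdjForm t a b c := by
  simp [Matrix.det_succ_row_zero, Fin.sum_univ_succ, Fin.succAbove, h3AdjForm]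
  ring

end H3Cartan

/-- Both sum-of-squares identities express positive definiteness of `adj(C_t)`. -/
theorem abs_le_two_of_h3AdjForm_eq {t a b c : ℝ} (ht : t ^ 2 = t + 1) (ht2 : t < 2)
    (h : h3AdjForm t a b c = 2 * (6 - 2 * t ^ 2)) :
    |a| ≤ 2 ∧ |b| ≤ 2 ∧ |c| ≤ 2 := by
  unfold h3AdjForm at h
  have h2t : 0 < 2 - t := by linarith
  have h3t : 0 < 3 - t := by linarith
  have hac : (2 - t) * (a ^ 2 + c ^ 2) + (2 * b + a + t * c) ^ 2 = 4 * (2 - t) := by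
    linear_combination h + (c ^ 2 + a ^ 2 - 4) * ht
  have hb : ((3 - t) * a + 2 * b + t * c) ^ 2 + (3 - t) * (2 - t) * b ^ 2
      + (2 - t) * (t * b + 2 * c) ^ 2 = 4 * (3 - t) * (2 - t) := by
    linear_combination (3 - t) * h
      + (c ^ 2 + 2 * b ^ 2 - b ^ 2 * t + (3 - t) * a ^ 2 - 4 * (3 - t)) * ht
  refine ⟨abs_le_of_sq_le_sq ?_ zero_le_two, abs_le_of_sq_le_sq ?_ zero_le_two,
    abs_le_of_sq_le_sq ?_ zero_le_two⟩
  · nlinarith [sq_nonneg (2 * b + a + t * c), sq_nonneg c]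
  · nlinarith [sq_nonneg ((3 - t) * a + 2 * b + t * c),
      mul_nonneg h2t.le (sq_nonneg (t * b + 2 * c)), mul_pos h3t h2t]
  · nlinarith [sq_nonneg (2 * b + a + t * c), sq_nonneg a]

/-- The ring ℤ[ω] with `ω² = 1 + ω`, abstractly isomorphic to ℤ[τ]. -/
abbrev GoldenInt := QuadraticAlgebra ℤ 1 1

namespace GoldenInt

noncomputable def toReal (t : ℝ) (ht : t ^ 2 = t + 1) : GoldenInt →ₐ[ℤ] ℝ :=
  lift ⟨t, by simp only [one_smul]; linear_combination ht⟩

theorem toReal_apply {t : ℝ} (ht : t ^ 2 = t + 1) (z : GoldenInt) :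
    toReal t ht z = z.re + z.im * t := by
  simp [toReal, zsmul_eq_mul]

@[simp]
theorem toReal_omega {t : ℝ} (ht : t ^ 2 = t + 1) : toReal t ht ω = t := by
  simp [toReal_apply]

theorem toReal_injective {t : ℝ} (ht : t ^ 2 = t + 1) (hirr : Irrational t) :
    Function.Injective (toReal t ht) := by
  refine (injective_iff_map_eq_zero _).2 fun z hz => ?_
  rw [toReal_apply] at hz
  have him : z.im = 0 := by
    by_contra h
    exact hirr ⟨-z.re / z.im, by push_cast; field_simp; linarith⟩
  ext
  · simpa [him] using hz
  · exact him

theorem toReal_h3AdjForm_eq {t : ℝ} (ht : t ^ 2 = t + 1) {x y z : GoldenInt}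
    (h : h3AdjForm ω x y z = 2 * (6 - 2 * ω ^ 2)) :
    h3AdjForm t (toReal t ht x) (toReal t ht y) (toReal t ht z) = 2 * (6 - 2 * t ^ 2) := by
  simpa only [map_h3AdjForm, map_mul, map_sub, map_pow, map_ofNat, toReal_omega]
    using congrArg (toReal t ht) h

theorem h3AdjForm_eq_of_toReal {t : ℝ} (ht : t ^ 2 = t + 1) (hirr : Irrational t)
    {x y z : GoldenInt}
    (h : h3AdjForm t (toReal t ht x) (toReal t ht y) (toReal t ht z) = 2 * (6 - 2 * t ^ 2)) :
    h3AdjForm ω x y z = 2 * (6 - 2 * ω ^ 2) := by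
  apply toReal_injective ht hirr
  simpa only [map_h3AdjForm, map_mul, map_sub, map_pow, map_ofNat, toReal_omega] using h

def smallNonpos : List GoldenInt := [0, -1, -2, -ω, 1 - ω]

theorem mem_smallNonpos {z : GoldenInt} (hφ0 : toReal φ goldenRatio_sq z ≤ 0)
    (hφ : |toReal φ goldenRatio_sq z| ≤ 2) (hψ : |toReal ψ goldenConj_sq z| ≤ 2) :
    z ∈ smallNonpos := by
  obtain ⟨p, q⟩ := z
  rw [toReal_apply] at hφ0 hφ hψ
  obtain ⟨hφl, -⟩ := abs_le.mp hφ
  obtain ⟨hψl, hψu⟩ := abs_le.mp hψ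
  have hsqrt5 : (2 : ℝ) < √5 := (Real.lt_sqrt zero_le_two).2 (by norm_num)
  have hdiff : (q : ℝ) * √5 = (p + q * φ) - (p + q * ψ) := by
    rw [← goldenRatio_sub_goldenConj]; ring
  have hq1 : q < 1 := by exact_mod_cast (show (q : ℝ) < 1 by nlinarith)
  have hq2 : -2 < q := by exact_mod_cast (show (-2 : ℝ) < q by nlinarith)
  have h1 := one_lt_goldenRatio
  have h2 := goldenRatio_lt_two
  interval_cases q
  · have hp1 : -1 < p := by exact_mod_cast (show (-1 : ℝ) < p by push_cast at hφl; linarith)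
    have hp2 : p < 2 := by exact_mod_cast (show (p : ℝ) < 2 by push_cast at hφ0; linarith)
    interval_cases p <;> decide
  · have hp1 : -3 < p := by exact_mod_cast (show (-3 : ℝ) < p by push_cast at hφl; linarith)
    have hp2 : p < 1 := by exact_mod_cast (show (p : ℝ) < 1 by push_cast at hφ0; linarith)
    interval_cases p <;> decide

theorem h3AdjForm_eq_on_smallNonpos :
    ∀ x ∈ smallNonpos, ∀ y ∈ smallNonpos, ∀ z ∈ smallNonpos,
      h3AdjForm ω x y z = 2 * (6 - 2 * ω ^ 2) → x = 0 ∧ y = 1 - ω ∧ z = 0 := by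
  decide

end GoldenInt

theorem tau_eq_goldenRatio : tau = φ := rfl

theorem Ztau_eq_range : Ztau = Set.range (GoldenInt.toReal φ goldenRatio_sq) := by
  ext x
  simp only [Ztau, Set.mem_ofPred_eq, Set.mem_range, GoldenInt.toReal_apply]
  constructor
  · rintro ⟨p, q, rfl⟩
    exact ⟨⟨p, q⟩, rfl⟩
  · rintro ⟨z, rfl⟩
    exact ⟨z.re, z.im, rfl⟩

/-- Uniqueness of the affine extension of the Cartan matrix of H₃. -/
theorem affine_extension_H3_unique (a b c : ℝ)
    (ha : a ∈ Ztau) (hb : b ∈ Ztau) (hc : c ∈ Ztau)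
    (ha0 : a ≤ 0) (hb0 : b ≤ 0) (hc0 : c ≤ 0)
    (hdet : Matrix.det !![(2 : ℝ), a, b, c;
                          a, 2, -1, 0;
                          b, -1, 2, -tau;
                          c, 0, -tau, 2] = 0) :
    a = 0 ∧ b = 1 - tau ∧ c = 0 := by
  rw [Ztau_eq_range] at ha hb hc
  obtain ⟨x, rfl⟩ := ha
  obtain ⟨y, rfl⟩ := hb
  obtain ⟨z, rfl⟩ := hc
  rw [tau_eq_goldenRatio, det_bordered_h3Cartan, sub_eq_zero, eq_comm] at hdet
  have hform := GoldenInt.h3AdjForm_eq_of_toReal goldenRatio_sq goldenRatio_irrational hdet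
  have hconj := GoldenInt.toReal_h3AdjForm_eq goldenConj_sq hform
  obtain ⟨hx, hy, hz⟩ := abs_le_two_of_h3AdjForm_eq goldenRatio_sq goldenRatio_lt_two hdet
  obtain ⟨hx', hy', hz'⟩ :=
    abs_le_two_of_h3AdjForm_eq goldenConj_sq (by linarith [goldenConj_neg]) hconj
  obtain ⟨rfl, rfl, rfl⟩ := GoldenInt.h3AdjForm_eq_on_smallNonpos
    x (GoldenInt.mem_smallNonpos ha0 hx hx') y (GoldenInt.mem_smallNonpos hb0 hy hy')
    z (GoldenInt.mem_smallNonpos hc0 hz hz') hform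
  simp [tau_eq_goldenRatio]
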